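/- arXiv:1702.08890 — 2 statements merged into one kernel-verified Lean document; each statement's English description precedes it below -/
import Mathlib

section
/- Let X ⊂ P^n be a hypersurface of degree 6 and C ⊂ X a smooth conic. Then there exists a point x ∈ C such that C ⊂ T_xX. -/
open MvPolynomial Module

noncomputable section

/-- Complex affine space with index set `ι`, carrying the Zariski topology. -/
def MAff (ι : Type) : Type := ι → ℂ

instance (ι : Type) : TopologicalSpace (MAff ι) :=
  TopologicalSpace.generateFrom
    {U : Set (MAff ι) | ∃ f : MvPolynomial ι ℂ,
      U = {x : MAff ι | MvPolynomial.eval (x : ι → ℂ) f ≠ 0}}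

/-- The vector space `ℂ^{n+1}` underlying `ℙ^n`. -/
abbrev Vn (n : ℕ) : Type := Fin (n + 1) → ℂ

/-- Complex projective `n`-space. -/
def Pr (n : ℕ) : Type := Projectivization ℂ (Vn n)

/-- A chosen representative vector of a projective point. -/
def prRep {n : ℕ} (p : Pr n) : Vn n :=
  Projectivization.rep (show Projectivization ℂ (Vn n) from p)

/-- The Zariski topology on `ℙ^n`, generated by non-vanishing loci of
homogeneous polynomials. -/
instance (n : ℕ) : TopologicalSpace (Pr n) :=
  TopologicalSpace.generateFrom
    {U : Set (Pr n) | ∃ (e : ℕ) (f : MvPolynomial (Fin (n + 1)) ℂ), f.IsHomogeneous e ∧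
      U = {p : Pr n | MvPolynomial.eval (prRep p) f ≠ 0}}

/-- The projective zero locus of a (homogeneous) polynomial. -/
def projZeros {n : ℕ} (F : MvPolynomial (Fin (n + 1)) ℂ) : Set (Pr n) :=
  {p | MvPolynomial.eval (prRep p) F = 0}

/-- Smoothness of the hypersurface `V(F)`: the partial derivatives of `F`
have no common zero besides the origin. -/
def IsSmoothHyp {n : ℕ} (F : MvPolynomial (Fin (n + 1)) ℂ) : Prop :=
  ∀ v : Vn n, v ≠ 0 → ∃ i, MvPolynomial.eval v (MvPolynomial.pderiv i F) ≠ 0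

/-- The linear subspace of `ℂ^{n+1}` cut out by the differential of `F` at `x`. -/
def tangentSub {n : ℕ} (F : MvPolynomial (Fin (n + 1)) ℂ) (x : Pr n) : Submodule ℂ (Vn n) :=
  LinearMap.ker (∑ i : Fin (n + 1),
    MvPolynomial.eval (prRep x) (MvPolynomial.pderiv i F) • (LinearMap.proj i : Vn n →ₗ[ℂ] ℂ))

/-- The linear subvariety of `ℙ^n` corresponding to a linear subspace of `ℂ^{n+1}`. -/
def projSub {n : ℕ} (W : Submodule ℂ (Vn n)) : Set (Pr n) := {p | prRep p ∈ W}

/-- The embedded (projective) tangent space `T_x X` of the hypersurface `X = V(F)` at `x`. -/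
def embTangent {n : ℕ} (F : MvPolynomial (Fin (n + 1)) ℂ) (x : Pr n) : Set (Pr n) :=
  projSub (tangentSub F x)

/-- The linear subspace of `ℂ^{n+1}` spanned by (the cone over) a subset of `ℙ^n`. -/
def spanSub {n : ℕ} (S : Set (Pr n)) : Submodule ℂ (Vn n) :=
  Submodule.span ℂ (prRep '' S)

/-- The linear span `⟨S⟩ ⊂ ℙ^n` of a subset `S ⊂ ℙ^n`. -/
def linSpan {n : ℕ} (S : Set (Pr n)) : Set (Pr n) := projSub (spanSub S)

/-- The cone over `B` with vertex `x`: closure of the union of lines `⟨x,b⟩`, `b ∈ B`. -/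
def ConePt {n : ℕ} (x : Pr n) (B : Set (Pr n)) : Set (Pr n) :=
  closure {p | ∃ b ∈ B, prRep p ∈ Submodule.span ℂ {prRep x, prRep b}}

/-- The dimension of a subset of a (Zariski) topological space, as the
topological Krull dimension of the subspace. -/
def dimS {T : Type} [TopologicalSpace T] (S : Set T) : WithBot ℕ∞ :=
  topologicalKrullDim ↥S

/-- The degree of a subvariety `Y ⊂ ℙ^n`: the largest finite number of points in
an intersection of `Y` with a linear subvariety. -/
def degSet {n : ℕ} (Y : Set (Pr n)) : ℕ :=
  sSup {m : ℕ | ∃ W : Submodule ℂ (Vn n),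
    (Y ∩ projSub W).Finite ∧ (Y ∩ projSub W).ncard = m}

/-- The Zariski tangent space of `Y ⊆ ℙ^n` at `p` (cut out by all homogeneous
polynomials vanishing on `Y`). -/
def idealTangent {n : ℕ} (Y : Set (Pr n)) (p : Pr n) : Submodule ℂ (Vn n) :=
  ⨅ f ∈ {f : MvPolynomial (Fin (n + 1)) ℂ |
      (∃ e, f.IsHomogeneous e) ∧ ∀ q ∈ Y, MvPolynomial.eval (prRep q) f = 0},
    tangentSub f p

/-- The singular locus of `Y ⊆ ℙ^n`: the points where the embedded tangent space
is bigger than the dimension of `Y`. -/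
def SingSet {n : ℕ} (Y : Set (Pr n)) : Set (Pr n) :=
  {p | p ∈ Y ∧ ((finrank ℂ (idealTangent Y p) : WithBot ℕ∞) ≠ dimS Y + 1)}

/-- The smooth conic in `ℙ^n` parametrized by `[s:t] ↦ [s² v₀ + st v₁ + t² v₂]`. -/
def conicOf {n : ℕ} (v : Fin 3 → Vn n) : Set (Pr n) :=
  {p | ∃ s t : ℂ, ¬ (s = 0 ∧ t = 0) ∧ ∃ c : ℂ, c ≠ 0 ∧
    prRep p = c • (s ^ 2 • v 0 + (s * t) • v 1 + t ^ 2 • v 2)}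

/-- A subset of `ℙ^n` is a smooth conic if it is the image of a degree-2
Veronese parametrization by a linearly independent triple of vectors. -/
def IsSmoothConic {n : ℕ} (C : Set (Pr n)) : Prop :=
  ∃ v : Fin 3 → Vn n, LinearIndependent ℂ v ∧ C = conicOf v

/-- The affine parameter space for conics. -/
abbrev CPAmb (n : ℕ) : Type := MAff (Fin 3 × Fin (n + 1))

/-- The rows of a parameter point. -/
def rowOf {n : ℕ} (v : CPAmb n) : Fin 3 → Vn n := fun i j => v (i, j)

/-- Parameters of smooth conics: linearly independent triples. -/
def CParam (n : ℕ) : Type := {v : CPAmb n // LinearIndependent ℂ (rowOf v)}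

instance (n : ℕ) : TopologicalSpace (CParam n) :=
  inferInstanceAs (TopologicalSpace {v : CPAmb n // LinearIndependent ℂ (rowOf v)})

/-- Two parameters are equivalent iff they cut out the same conic. -/
def conicSetoid (n : ℕ) : Setoid (CParam n) :=
  ⟨fun a b => conicOf (rowOf a.1) = conicOf (rowOf b.1),
    ⟨fun _ => rfl, fun h => h.symm, fun h1 h2 => h1.trans h2⟩⟩

/-- The space of smooth conics in `ℙ^n`, with its (quotient Zariski) topology. -/
def Conic (n : ℕ) : Type := Quotient (conicSetoid n)

instance (n : ℕ) : TopologicalSpace (Conic n) :=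
  inferInstanceAs (TopologicalSpace (Quotient (conicSetoid n)))

/-- The underlying subset of `ℙ^n` of a conic. -/
def Conic.toSet {n : ℕ} : Conic n → Set (Pr n) :=
  Quotient.lift (fun v : CParam n => conicOf (rowOf v.1)) (fun _ _ h => h)

/-- `R_2(X)`: the space of smooth conics lying in `X`. -/
def R2set {n : ℕ} (X : Set (Pr n)) : Set (Conic n) := {c | Conic.toSet c ⊆ X}

/-- `Loc A`: the closure of the locus swept out by a family of conics `A`. -/
def Loc {n : ℕ} (A : Set (Conic n)) : Set (Pr n) :=
  closure (⋃ c ∈ A, Conic.toSet c)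

/-- `R` is an irreducible component of `S`: a maximal irreducible subset of `S`. -/
def IsCompOf {T : Type} [TopologicalSpace T] (R S : Set T) : Prop :=
  R ⊆ S ∧ IsIrreducible R ∧ ∀ A : Set T, A ⊆ S → IsIrreducible A → R ⊆ A → A = R

/-- `P` holds for a general point of `S`: it holds on a nonempty (hence, for
irreducible `S`, dense) relatively open subset of `S`. -/
def ForGeneral {T : Type} [TopologicalSpace T] (S : Set T) (P : T → Prop) : Prop :=
  ∃ O : Set T, IsOpen O ∧ (S ∩ O).Nonempty ∧ ∀ x ∈ S ∩ O, P x

/-- `ℙ^n × ℙ^n` with the Zariski topology generated by non-vanishing loci of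
bihomogeneous polynomials. -/
def Pr2 (n : ℕ) : Type := Pr n × Pr n

instance (n : ℕ) : TopologicalSpace (Pr2 n) :=
  TopologicalSpace.generateFrom
    {U : Set (Pr2 n) | ∃ (de : ℕ × ℕ) (f : MvPolynomial (Fin (n + 1) ⊕ Fin (n + 1)) ℂ),
      f.IsWeightedHomogeneous (Sum.elim (fun _ => ((1 : ℕ), (0 : ℕ))) fun _ => (0, 1)) de ∧
      U = {q : Pr2 n | MvPolynomial.eval (Sum.elim (prRep q.1) (prRep q.2)) f ≠ 0}}

/-- `ℙ^n × ℙ^n × ℙ^n` with the Zariski topology generated by non-vanishing loci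
of trihomogeneous polynomials. -/
def Pr3 (n : ℕ) : Type := Pr n × Pr n × Pr n

instance (n : ℕ) : TopologicalSpace (Pr3 n) :=
  TopologicalSpace.generateFrom
    {U : Set (Pr3 n) | ∃ (de : ℕ × ℕ × ℕ)
        (f : MvPolynomial (Fin (n + 1) ⊕ (Fin (n + 1) ⊕ Fin (n + 1))) ℂ),
      f.IsWeightedHomogeneous
        (Sum.elim (fun _ => ((1 : ℕ), (0 : ℕ), (0 : ℕ)))
          (Sum.elim (fun _ => (0, 1, 0)) fun _ => (0, 0, 1))) de ∧
      U = {q : Pr3 n |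
        MvPolynomial.eval (Sum.elim (prRep q.1) (Sum.elim (prRep q.2.1) (prRep q.2.2))) f ≠ 0}}

/-- The affine parameter space for a conic together with `k` marked points on it
(each marked point is given by parameters `(s,t)` on the conic). -/
def PSp (n k : ℕ) : Type := MAff ((Fin 3 × Fin (n + 1)) ⊕ (Fin k × Fin 2))

instance (n k : ℕ) : TopologicalSpace (PSp n k) :=
  inferInstanceAs (TopologicalSpace (MAff ((Fin 3 × Fin (n + 1)) ⊕ (Fin k × Fin 2))))

/-- The conic-parameter part of a marked parameter point. -/
def vparts {n k : ℕ} (w : PSp n k) : Fin 3 → Vn n := fun i j => w (Sum.inl (i, j))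

/-- The vector representing the `m`-th marked point. -/
def ptVec {n k : ℕ} (w : PSp n k) (m : Fin k) : Vn n :=
  (w (Sum.inr (m, 0))) ^ 2 • vparts w 0
    + (w (Sum.inr (m, 0)) * w (Sum.inr (m, 1))) • vparts w 1
    + (w (Sum.inr (m, 1))) ^ 2 • vparts w 2

/-- Nondegeneracy of a marked parameter point. -/
def goodW {n k : ℕ} (w : PSp n k) : Prop :=
  LinearIndependent ℂ (vparts w) ∧
    ∀ m : Fin k, ¬ (w (Sum.inr (m, 0)) = 0 ∧ w (Sum.inr (m, 1)) = 0)

/-- The conic `conicOf v` belongs (as an element of the conic space) to `S`. -/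
def conicMem {n : ℕ} (S : Set (Conic n)) (v : Fin 3 → Vn n) : Prop :=
  ∃ c ∈ S, Conic.toSet c = conicOf v

/-- `x = [u]` in `ℙ^n`. -/
def repEq {n : ℕ} (x : Pr n) (u : Vn n) : Prop :=
  ∃ c : ℂ, c ≠ 0 ∧ prRep x = c • u

/-- Forget all marked points except the `m`-th one. -/
def resPt {n k : ℕ} (w : PSp n k) (m : Fin k) : PSp n 1 :=
  fun z => match z with
    | Sum.inl a => w (Sum.inl a)
    | Sum.inr (_, j) => w (Sum.inr (m, j))

/-- The condition `C ⊂ T_x X` for the conic and marked point of `w`. -/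
def tangentCond {n : ℕ} (F : MvPolynomial (Fin (n + 1)) ℂ) (w : PSp n 1) : Prop :=
  ∀ x : Pr n, repEq x (ptVec w 0) → conicOf (vparts w) ⊆ embTangent F x

/-- The parameter space of the universal family `U = {(C,x) : C ∈ R, x ∈ C}`. -/
def Uparam {n : ℕ} (R : Set (Conic n)) : Set (PSp n 1) :=
  {w | goodW w ∧ conicMem R (vparts w)}

/-- The parameter space of `{(C,x) ∈ U : C ⊂ T_x X}`. -/
def UstarAmb {n : ℕ} (F : MvPolynomial (Fin (n + 1)) ℂ) (R : Set (Conic n)) :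
    Set (PSp n 1) :=
  {w | goodW w ∧ conicMem R (vparts w) ∧ tangentCond F w}

/-- Dominance of the projection `U* → R`. -/
def domToR {n : ℕ} (R : Set (Conic n)) (Ustar : Set (PSp n 1)) : Prop :=
  R ⊆ closure {c : Conic n | ∃ w ∈ Ustar, Conic.toSet c = conicOf (vparts w)}

/-- `R*_x = π(ev⁻¹(x) ∩ U*)`: conics `C` with `x ∈ C ⊂ T_x X` coming from `U*`. -/
def Rstar {n : ℕ} (Ustar : Set (PSp n 1)) (x : Pr n) : Set (Conic n) :=
  {c | ∃ w ∈ Ustar, Conic.toSet c = conicOf (vparts w) ∧ repEq x (ptVec w 0)}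

/-- The parameter space of `U* ×_R U`. -/
def UUset {n : ℕ} (R : Set (Conic n)) (Ustar : Set (PSp n 1)) : Set (PSp n 2) :=
  {w | goodW w ∧ conicMem R (vparts w) ∧ resPt w 0 ∈ Ustar}

/-- The parameter space of `U* ×_R U ×_R U`. -/
def UUUset {n : ℕ} (R : Set (Conic n)) (Ustar : Set (PSp n 1)) : Set (PSp n 3) :=
  {w | goodW w ∧ conicMem R (vparts w) ∧ resPt w 0 ∈ Ustar}

/-- `ev(U*) ⊆ ℙ^n`. -/
def evUstar {n : ℕ} (Ustar : Set (PSp n 1)) : Set (Pr n) :=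
  {x | ∃ w ∈ Ustar, repEq x (ptVec w 0)}

/-- The image of `μ : U* ×_R U → ev(U*) × Y`. -/
def imMu {n : ℕ} (R : Set (Conic n)) (Ustar : Set (PSp n 1)) : Set (Pr n × Pr n) :=
  {q | ∃ w ∈ UUset R Ustar, repEq q.1 (ptVec w 0) ∧ repEq q.2 (ptVec w 1)}

/-- The hyperplane of `ℙ^n` with dual coordinates `ξ` (a point of `(ℙ^n)^∨ ≃ ℙ^n`). -/
def hypOf {n : ℕ} (ξ : Pr n) : Set (Pr n) :=
  {p | (∑ i, prRep ξ i * prRep p i) = 0}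

/-- The restriction of `F` to the plane spanned by `v₀, v₁, v₂`, as a ternary form. -/
def pullbackPlane {n : ℕ} (v : Fin 3 → Vn n) (F : MvPolynomial (Fin (n + 1)) ℂ) :
    MvPolynomial (Fin 3) ℂ :=
  MvPolynomial.aeval
    (fun i => MvPolynomial.C (v 0 i) * MvPolynomial.X 0
      + MvPolynomial.C (v 1 i) * MvPolynomial.X 1
      + MvPolynomial.C (v 2 i) * MvPolynomial.X 2) F

/-- The equation of the standard conic `{[s²:st:t²]}` in the plane: `x₀x₂ - x₁²`. -/
def qconic : MvPolynomial (Fin 3) ℂ :=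
  MvPolynomial.X 0 * MvPolynomial.X 2 - MvPolynomial.X 1 ^ 2

/-- The curve in the plane `⟨v₀,v₁,v₂⟩ ⊂ ℙ^n` cut out by a ternary form `h`. -/
def planeCurve {n : ℕ} (v : Fin 3 → Vn n) (h : MvPolynomial (Fin 3) ℂ) : Set (Pr n) :=
  {p | ∃ a b c : ℂ, ¬ (a = 0 ∧ b = 0 ∧ c = 0) ∧
    MvPolynomial.eval ![a, b, c] h = 0 ∧
    ∃ e : ℂ, e ≠ 0 ∧ prRep p = e • (a • v 0 + b • v 1 + c • v 2)}

/-!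
Parametrize the conic as `φ(s,t) = s²v₀ + st v₁ + t²v₂` and put `Aₖ(s,t) = dF_{φ(s,t)}(vₖ)`,
binary forms of degree `2(d-1)`. Since `C` spans the plane `⟨v₀,v₁,v₂⟩`, we have
`C ⊂ T_{φ(s,t)}X` exactly when `A₀, A₁, A₂` all vanish at `(s,t)`. Differentiating `F ∘ φ = 0`
gives `2sA₀ + tA₁ = 0` and `sA₁ + 2tA₂ = 0`, so a zero of `A₀` off `t = 0`, or of `A₂` off
`s = 0`, is a common zero. If there is none, `A₀(s,1)` and `A₂(1,t)` are polynomials without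
roots, hence nonzero constants; but then `A₂(s,1) = s²A₀(s,1)` contradicts the homogeneity of `A₂`
unless `2(d-1) = 2`.
-/

namespace MvPolynomial

theorem IsHomogeneous.eval_smul {σ R : Type*} [CommSemiring R] {f : MvPolynomial σ R} {m : ℕ}
    (hf : f.IsHomogeneous m) (c : R) (x : σ → R) :
    eval (c • x) f = c ^ m * eval x f := by
  rw [eval_eq, eval_eq, Finset.mul_sum]
  refine Finset.sum_congr rfl fun d hd => ?_
  have hdeg : ∑ i ∈ d.support, d i = m := by
    rw [← Finsupp.degree_apply, Finsupp.degree_eq_weight_one]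
    exact hf (mem_support_iff.mp hd)
  simp only [Pi.smul_apply, smul_eq_mul, mul_pow, Finset.prod_mul_distrib,
    Finset.prod_pow_eq_pow_sum, hdeg]
  ring

theorem eval_aeval {ι τ R : Type*} [CommSemiring R] (σ : ι → MvPolynomial τ R)
    (P : MvPolynomial ι R) (x : τ → R) :
    eval x (aeval σ P) = eval (fun i => eval x (σ i)) P := by
  simpa using comp_aeval_apply (aeval x) (f := σ) P

theorem polynomial_eval_aeval {ι R : Type*} [CommSemiring R] (g : ι → Polynomial R)
    (P : MvPolynomial ι R) (s : R) :
    (aeval g P).eval s = eval (fun i => (g i).eval s) P := by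
  rw [← Polynomial.coe_aeval_eq_eval, comp_aeval_apply, ← coe_aeval_eq_eval]
  rfl

theorem derivation_aeval {ι R A : Type*} [CommSemiring R] [CommSemiring A] [Algebra R A]
    [Fintype ι] (D : Derivation R A A) (σ : ι → A) (p : MvPolynomial ι R) :
    D (aeval σ p) = ∑ i, aeval σ (pderiv i p) * D (σ i) := by
  classical
  induction p using MvPolynomial.induction_on with
  | C a => simp
  | add p q hp hq => simp [hp, hq, add_mul, Finset.sum_add_distrib]
  | mul_X p j hp =>
    simp only [map_mul, aeval_X, Derivation.leibniz, hp, pderiv_X, map_add, smul_eq_mul, add_mul,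
      Finset.sum_add_distrib]
    simp [Pi.single_apply, Finset.mul_sum, mul_comm, mul_left_comm]

section DirectionalDerivative

variable {ι R : Type*} [Fintype ι] [CommSemiring R]

def dirDeriv (F : MvPolynomial ι R) (w : ι → R) : MvPolynomial ι R :=
  ∑ i, C (w i) * pderiv i F

theorem IsHomogeneous.dirDeriv {F : MvPolynomial ι R} {d : ℕ} (hF : F.IsHomogeneous d)
    (w : ι → R) : (dirDeriv F w).IsHomogeneous (d - 1) :=
  IsHomogeneous.sum _ _ _ fun i _ => by
    simpa using (isHomogeneous_C _ (w i)).mul (hF.pderiv (i := i))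

/-- Chain rule for `F` composed with the parametrization `∑ₖ mₖ vₖ`. -/
theorem derivation_aeval_sum_C_mul {κ τ : Type*} [Fintype κ]
    (D : Derivation R (MvPolynomial τ R) (MvPolynomial τ R)) (F : MvPolynomial ι R)
    (v : κ → ι → R) (m : κ → MvPolynomial τ R) :
    D (aeval (fun i => ∑ k, C (v k i) * m k) F)
      = ∑ k, D (m k) * aeval (fun i => ∑ k, C (v k i) * m k) (dirDeriv F (v k)) := by
  simp only [derivation_aeval, dirDeriv, map_sum, map_mul, aeval_C, algebraMap_eq,
    Finset.mul_sum]
  rw [Finset.sum_comm]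
  refine Finset.sum_congr rfl fun i _ => Finset.sum_congr rfl fun k _ => ?_
  rw [C_mul', D.map_smul, smul_eq_C_mul]
  ring

end DirectionalDerivative

end MvPolynomial

theorem Polynomial.eval_eq_eval_zero_of_forall_eval_ne_zero {K : Type*} [Field K] [IsAlgClosed K]
    {p : Polynomial K} (hp : ∀ z, p.eval z ≠ 0) (z : K) : p.eval z = p.eval 0 := by
  have hdeg : p.degree = 0 := by
    by_contra h
    obtain ⟨w, hw⟩ := IsAlgClosed.exists_root p h
    exact hp w hw
  rw [Polynomial.eq_C_of_degree_le_zero hdeg.le]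
  simp

theorem MvPolynomial.eval_comp_eq_of_forall_ne_zero {ι K : Type*} [Field K] [IsAlgClosed K]
    (g : ι → Polynomial K) (Q : MvPolynomial ι K)
    (hQ : ∀ s, eval (fun i => (g i).eval s) Q ≠ 0) (s : K) :
    eval (fun i => (g i).eval s) Q = eval (fun i => (g i).eval 0) Q := by
  simp only [← polynomial_eval_aeval] at hQ ⊢
  exact Polynomial.eval_eq_eval_zero_of_forall_eval_ne_zero hQ s

/-- Without roots, both dehomogenizations are constant, and then homogeneity of `Q` forces
`2 ^ m = 4`. -/
theorem exists_eval_eq_zero_of_eval_eq_sq_mul {m : ℕ} (hm : m ≠ 2) {P Q : MvPolynomial (Fin 2) ℂ}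
    (hQ : Q.IsHomogeneous m) (hPQ : ∀ s, eval ![s, 1] Q = s ^ 2 * eval ![s, 1] P) :
    (∃ s, eval ![s, 1] P = 0) ∨ ∃ t, eval ![1, t] Q = 0 := by
  by_contra! h
  obtain ⟨hP0, hQ0⟩ := h
  have line₀ : ∀ s : ℂ, (fun i => (![Polynomial.X, 1] i).eval s) = ![s, 1] := fun s => by
    simp [_root_.funext_iff, Fin.forall_fin_two]
  have line₁ : ∀ t : ℂ, (fun i => (![1, Polynomial.X] i).eval t) = ![1, t] := fun t => by
    simp [_root_.funext_iff, Fin.forall_fin_two]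
  have hP : ∀ s, eval ![s, 1] P = eval ![0, 1] P := by
    simpa only [line₀] using
      eval_comp_eq_of_forall_ne_zero ![Polynomial.X, 1] P (by simpa only [line₀] using hP0)
  have hQ' : ∀ t, eval ![1, t] Q = eval ![1, 0] Q := by
    simpa only [line₁] using
      eval_comp_eq_of_forall_ne_zero ![1, Polynomial.X] Q (by simpa only [line₁] using hQ0)
  have hscale : eval ![2, 1] Q = 2 ^ m * eval ![1, 1 / 2] Q := by
    rw [← hQ.eval_smul]
    congr 1
    simp
  have hc : eval ![1, 0] Q = eval ![0, 1] P := by simpa [hP, hQ'] using hPQ 1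
  have h4 : (4 - 2 ^ m) * eval ![0, 1] P = 0 := by
    have h2 := hPQ 2
    rw [hscale, hP, hQ', hc] at h2
    linear_combination -h2
  have hm' : (2 : ℂ) ^ m ≠ 4 := fun h => hm <| by
    have : ((2 ^ m : ℕ) : ℂ) = ((2 ^ 2 : ℕ) : ℂ) := by push_cast; rw [h]
    exact Nat.pow_right_injective le_rfl (Nat.cast_injective this)
  exact hP0 0 ((mul_eq_zero.mp h4).resolve_left (sub_ne_zero.mpr hm'.symm))

theorem exists_ne_zero_forall_eval_eq_zero_of_relations {m : ℕ} (hm : m ≠ 2)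
    (P : Fin 3 → MvPolynomial (Fin 2) ℂ) (hP : (P 2).IsHomogeneous m)
    (h₀ : 2 * X 0 * P 0 + X 1 * P 1 = 0) (h₁ : X 0 * P 1 + 2 * X 1 * P 2 = 0) :
    ∃ x : Fin 2 → ℂ, x ≠ 0 ∧ ∀ k, eval x (P k) = 0 := by
  have rel₀ : ∀ s t, 2 * s * eval ![s, t] (P 0) + t * eval ![s, t] (P 1) = 0 := fun s t => by
    simpa using congrArg (eval ![s, t]) h₀
  have rel₁ : ∀ s t, s * eval ![s, t] (P 1) + 2 * t * eval ![s, t] (P 2) = 0 := fun s t => by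
    simpa using congrArg (eval ![s, t]) h₁
  have hPQ : ∀ s, eval ![s, 1] (P 2) = s ^ 2 * eval ![s, 1] (P 0) := fun s => by
    linear_combination (1 / 2 : ℂ) * rel₁ s 1 - (s / 2) * rel₀ s 1
  rcases exists_eval_eq_zero_of_eval_eq_sq_mul hm hP hPQ with ⟨s, hs⟩ | ⟨t, ht⟩
  · have h1 : eval ![s, 1] (P 1) = 0 := by simpa [hs] using rel₀ s 1
    have h2 : eval ![s, 1] (P 2) = 0 := by simpa [h1] using rel₁ s 1
    refine ⟨![s, 1], by simp, fun k => ?_⟩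
    fin_cases k <;> assumption
  · have h1 : eval ![1, t] (P 1) = 0 := by simpa [ht] using rel₁ 1 t
    have h0 : eval ![1, t] (P 0) = 0 := by simpa [h1] using rel₀ 1 t
    refine ⟨![1, t], by simp, fun k => ?_⟩
    fin_cases k <;> assumption

section Conic

variable {n : ℕ}

theorem mem_tangentSub_iff {F : MvPolynomial (Fin (n + 1)) ℂ} {x : Pr n} {w : Vn n} :
    w ∈ tangentSub F x ↔ eval (prRep x) (dirDeriv F w) = 0 := by
  simp [tangentSub, dirDeriv, LinearMap.sum_apply, mul_comm]

def veronese (v : Fin 3 → Vn n) (s t : ℂ) : Vn n :=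
  s ^ 2 • v 0 + (s * t) • v 1 + t ^ 2 • v 2

def veroneseMonomials : Fin 3 → MvPolynomial (Fin 2) ℂ := ![X 0 ^ 2, X 0 * X 1, X 1 ^ 2]

def veroneseSub (v : Fin 3 → Vn n) (i : Fin (n + 1)) : MvPolynomial (Fin 2) ℂ :=
  ∑ k, C (v k i) * veroneseMonomials k

theorem eval_veroneseSub (v : Fin 3 → Vn n) (x : Fin 2 → ℂ) :
    (fun i => eval x (veroneseSub v i)) = veronese v (x 0) (x 1) := by
  ext i
  simp [veroneseSub, veronese, veroneseMonomials, Fin.sum_univ_three]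
  ring

theorem veronese_ne_zero {v : Fin 3 → Vn n} (hv : LinearIndependent ℂ v) {s t : ℂ}
    (hst : ¬(s = 0 ∧ t = 0)) : veronese v s t ≠ 0 := by
  intro h
  have hz := Fintype.linearIndependent_iff.mp hv ![s ^ 2, s * t, t ^ 2] (by
    simpa [Fin.sum_univ_three, veronese] using h)
  exact hst ⟨pow_eq_zero_iff two_ne_zero |>.mp (hz 0), pow_eq_zero_iff two_ne_zero |>.mp (hz 2)⟩

theorem repEq_mk {u : Vn n} (hu : u ≠ 0) :
    repEq (Projectivization.mk ℂ u hu : Pr n) u := by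
  obtain ⟨a, ha⟩ := Projectivization.exists_smul_eq_mk_rep ℂ u hu
  exact ⟨a, a.ne_zero, ha.symm⟩

theorem mk_veronese_mem_conicOf {v : Fin 3 → Vn n} (hv : LinearIndependent ℂ v) {s t : ℂ}
    (hst : ¬(s = 0 ∧ t = 0)) :
    (Projectivization.mk ℂ (veronese v s t) (veronese_ne_zero hv hst) : Pr n) ∈ conicOf v :=
  ⟨s, t, hst, repEq_mk _⟩

theorem conicOf_subset_projSub {v : Fin 3 → Vn n} {W : Submodule ℂ (Vn n)} (hW : ∀ k, v k ∈ W) :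
    conicOf v ⊆ projSub W := by
  rintro p ⟨s, t, -, c, -, hp⟩
  show prRep p ∈ W
  rw [hp]
  exact W.smul_mem _ (W.add_mem (W.add_mem (W.smul_mem _ (hW 0)) (W.smul_mem _ (hW 1)))
    (W.smul_mem _ (hW 2)))

-- `Aₖ(s,t) = dF_{φ(s,t)}(vₖ)`
def tangencyCoeff (v : Fin 3 → Vn n) (F : MvPolynomial (Fin (n + 1)) ℂ) (k : Fin 3) :
    MvPolynomial (Fin 2) ℂ :=
  aeval (veroneseSub v) (dirDeriv F (v k))

theorem eval_tangencyCoeff (v : Fin 3 → Vn n) (F : MvPolynomial (Fin (n + 1)) ℂ) (k : Fin 3)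
    (x : Fin 2 → ℂ) :
    eval x (tangencyCoeff v F k) = eval (veronese v (x 0) (x 1)) (dirDeriv F (v k)) := by
  rw [tangencyCoeff, eval_aeval, eval_veroneseSub]

theorem isHomogeneous_veroneseSub (v : Fin 3 → Vn n) (i : Fin (n + 1)) :
    (veroneseSub v i).IsHomogeneous 2 :=
  IsHomogeneous.sum _ _ _ fun k _ => by
    simpa using (isHomogeneous_C _ (v k i)).mul (show (veroneseMonomials k).IsHomogeneous 2 by
      fin_cases k
      · exact (isHomogeneous_X _ _).pow 2
      · exact (isHomogeneous_X _ _).mul (isHomogeneous_X _ _)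
      · exact (isHomogeneous_X _ _).pow 2)

theorem repEq.eval_eq_zero_iff {x : Pr n} {u : Vn n} (hx : repEq x u)
    {f : MvPolynomial (Fin (n + 1)) ℂ} {m : ℕ} (hf : f.IsHomogeneous m) :
    eval (prRep x) f = 0 ↔ eval u f = 0 := by
  obtain ⟨c, hc, h⟩ := hx
  simp [h, hf.eval_smul, hc]

theorem eval_veronese_eq_zero {d : ℕ} {F : MvPolynomial (Fin (n + 1)) ℂ}
    (hF : F.IsHomogeneous d) {v : Fin 3 → Vn n} (hv : LinearIndependent ℂ v)
    (hCX : conicOf v ⊆ projZeros F) (s t : ℂ) : eval (veronese v s t) F = 0 := by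
  have hvan : ∀ s t, ¬(s = 0 ∧ t = 0) → eval (veronese v s t) F = 0 := fun s t hst =>
    ((repEq_mk _).eval_eq_zero_iff hF).mp (hCX (mk_veronese_mem_conicOf hv hst))
  by_cases hst : s = 0 ∧ t = 0
  · obtain ⟨rfl, rfl⟩ := hst
    have h0 : veronese v 0 0 = (0 : ℂ) • veronese v 1 0 := by simp [veronese]
    rw [h0, hF.eval_smul, hvan 1 0 (by simp), mul_zero]
  · exact hvan s t hst

theorem tangencyCoeff_relations {v : Fin 3 → Vn n} {F : MvPolynomial (Fin (n + 1)) ℂ}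
    (hF : ∀ s t, eval (veronese v s t) F = 0) :
    2 * X 0 * tangencyCoeff v F 0 + X 1 * tangencyCoeff v F 1 = 0 ∧
      X 0 * tangencyCoeff v F 1 + 2 * X 1 * tangencyCoeff v F 2 = 0 := by
  have hG : aeval (veroneseSub v) F = 0 := by
    refine MvPolynomial.funext fun x => ?_
    rw [eval_aeval, eval_veroneseSub, hF, map_zero]
  have chain : ∀ j : Fin 2, pderiv j (aeval (veroneseSub v) F)
      = ∑ k, pderiv j (veroneseMonomials k) * tangencyCoeff v F k :=
    fun j => derivation_aeval_sum_C_mul (pderiv j) F v veroneseMonomials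
  simp only [hG, map_zero] at chain
  constructor
  · simpa [Fin.sum_univ_three, veroneseMonomials, tangencyCoeff, eq_comm] using chain 0
  · simpa [Fin.sum_univ_three, veroneseMonomials, tangencyCoeff, eq_comm] using chain 1

theorem exists_mem_conicOf_subset_embTangent {d : ℕ} (hd : d ≠ 2)
    {F : MvPolynomial (Fin (n + 1)) ℂ} (hF : F.IsHomogeneous d)
    {v : Fin 3 → Vn n} (hv : LinearIndependent ℂ v) (hCX : conicOf v ⊆ projZeros F) :
    ∃ x ∈ conicOf v, conicOf v ⊆ embTangent F x := by
  obtain ⟨h₀, h₁⟩ := tangencyCoeff_relations (eval_veronese_eq_zero hF hv hCX)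
  obtain ⟨x, hx0, hx⟩ := exists_ne_zero_forall_eval_eq_zero_of_relations (by omega) _
    ((hF.dirDeriv (v 2)).aeval _ (isHomogeneous_veroneseSub v)) h₀ h₁
  have hst : ¬(x 0 = 0 ∧ x 1 = 0) := fun h => hx0 (funext (Fin.forall_fin_two.mpr h))
  refine ⟨_, mk_veronese_mem_conicOf hv hst, conicOf_subset_projSub fun k => ?_⟩
  refine mem_tangentSub_iff.mpr (((repEq_mk _).eval_eq_zero_iff (hF.dirDeriv _)).mpr ?_)
  rw [← eval_tangencyCoeff]
  exact hx k

end Conic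

theorem exists_point_conic_in_tangent_general (n : ℕ) (F : MvPolynomial (Fin (n + 1)) ℂ)
    (hhom : F.IsHomogeneous 6)
    (C : Set (Pr n)) (hC : IsSmoothConic C) (hCX : C ⊆ projZeros F) :
    ∃ x ∈ C, C ⊆ embTangent F x := by
  obtain ⟨v, hv, rfl⟩ := hC
  exact exists_mem_conicOf_subset_embTangent (by norm_num) hhom hv hCX

/-- For a hypersurface `X ⊂ ℙ^n` of degree `6` and a smooth conic `C ⊆ X`,
there is always a point `x ∈ C` with `C ⊆ T_x X`. -/
theorem exists_point_conic_in_tangent (n : ℕ) (F : MvPolynomial (Fin (n + 1)) ℂ)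
    (hF0 : F ≠ 0) (hhom : F.IsHomogeneous 6)
    (C : Set (Pr n)) (hC : IsSmoothConic C) (hCX : C ⊆ projZeros F) :
    ∃ x ∈ C, C ⊆ embTangent F x :=
  exists_point_conic_in_tangent_general n F hhom C hC hCX

end
end

section
/- Let X ⊂ P^n be a hypersurface and let x ≠ y be points of X with y ∈ T_xX. Then every smooth conic C ⊂ X passing through both x and y satisfies C ⊂ T_xX. -/
open MvPolynomial Module

noncomputable section

/-!
Let `ℓ = dF_x` and let `φ(s,t) = s²v₀ + st v₁ + t²v₂` parametrize `C`. Then `q = ℓ ∘ φ` is a binary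
quadratic form. Since `F ∘ φ ≡ 0`, differentiating at the parameter `(s₀,t₀)` of `x` shows that
`(s₀,t₀)` is a critical point of `q`, i.e. a double root; `y ∈ T_xX` says that `q` also vanishes at
the parameter of `y`, which is a different point of `ℙ¹` since `x ≠ y`. A binary quadratic form with
a double root and a further root is zero, so `ℓ` vanishes on all of `C`.
-/

namespace MvPolynomial

section Differential

variable {σ R : Type*} [CommSemiring R] [Fintype σ]

theorem IsHomogeneous.eval_smul_s10 {F : MvPolynomial σ R} {d : ℕ} (hF : F.IsHomogeneous d)
    (c : R) (y : σ → R) : eval (c • y) F = c ^ d * eval y F := by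
  rw [eval_eq', eval_eq', Finset.mul_sum]
  refine Finset.sum_congr rfl fun m hm => ?_
  have hdeg : ∑ i, m i = d := by
    rw [← hF (mem_support_iff.mp hm), Finsupp.weight_apply, Finsupp.sum_fintype _ _ (by simp)]
    simp
  simp only [Pi.smul_apply, smul_eq_mul, mul_pow, Finset.prod_mul_distrib,
    Finset.prod_pow_eq_pow_sum, hdeg]
  ring

theorem derivative_aeval (g : σ → Polynomial R) (F : MvPolynomial σ R) :
    Polynomial.derivative (aeval g F) =
      ∑ i, aeval g (pderiv i F) * Polynomial.derivative (g i) := by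
  classical
  induction F using MvPolynomial.induction_on with
  | C a => simp
  | add p q hp hq => simp [hp, hq, add_mul, Finset.sum_add_distrib]
  | mul_X p j hp =>
    simp only [map_mul, aeval_X, Polynomial.derivative_mul, hp, Derivation.leibniz, smul_eq_mul,
      pderiv_X, map_add, add_mul, Finset.sum_add_distrib, Finset.sum_mul, Pi.single_apply]
    simp [mul_assoc, mul_comm, add_comm]

def differentialAt (F : MvPolynomial σ R) (p : σ → R) : (σ → R) →ₗ[R] R :=
  ∑ i, eval p (pderiv i F) • LinearMap.proj i

theorem differentialAt_apply (F : MvPolynomial σ R) (p w : σ → R) :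
    differentialAt F p w = ∑ i, eval p (pderiv i F) * w i := by
  simp [differentialAt]

end Differential

theorem differentialAt_eq_zero_of_eval_curve_eq_zero {σ K : Type*} [Fintype σ] [Field K]
    [Infinite K] {F : MvPolynomial σ K} {p w z : σ → K}
    (h : ∀ ε : K, eval (p + ε • w + ε ^ 2 • z) F = 0) : differentialAt F p w = 0 := by
  set γ : σ → Polynomial K := fun i =>
    Polynomial.C (p i) + Polynomial.C (w i) * Polynomial.X + Polynomial.C (z i) * Polynomial.X ^ 2
  have hγ : aeval γ F = 0 := Polynomial.funext fun ε => by
    rw [← Polynomial.coe_aeval_eq_eval, comp_aeval_apply, map_zero]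
    change eval _ F = 0
    rw [← h ε]
    congr 2
    ext i
    simp only [Polynomial.coe_aeval_eq_eval, Polynomial.eval_add, Polynomial.eval_C,
      Polynomial.eval_mul, Polynomial.eval_X, Polynomial.eval_pow, Pi.add_apply, Pi.smul_apply,
      smul_eq_mul, γ]
    ring
  have := congrArg (Polynomial.eval 0 ∘ Polynomial.derivative) hγ
  simpa [derivative_aeval, differentialAt_apply, Polynomial.eval_finsetSum, γ,
    ← Polynomial.coe_aeval_eq_eval, comp_aeval_apply] using this

end MvPolynomial

theorem binaryQuadratic_eq_zero_of_double_root {K : Type*} [CommRing K] [IsDomain K]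
    [NeZero (2 : K)] {A B D s₀ t₀ s₁ t₁ : K} (hs : 2 * s₀ * A + t₀ * B = 0)
    (ht : s₀ * B + 2 * t₀ * D = 0) (h₁ : s₁ ^ 2 * A + s₁ * t₁ * B + t₁ ^ 2 * D = 0)
    (hΔ : s₀ * t₁ - s₁ * t₀ ≠ 0) : A = 0 ∧ B = 0 ∧ D = 0 := by
  -- `hs` and `ht` force `A s² + B st + D t² = λ (t₀ s - s₀ t)²`, so `h₁` reads `λ Δ² = 0`.
  have h2Δ : 2 * (s₀ * t₁ - s₁ * t₀) ^ 2 ≠ 0 := mul_ne_zero two_ne_zero (pow_ne_zero 2 hΔ)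
  have hA : A = 0 := by
    refine (mul_eq_zero.mp ?_).resolve_left h2Δ
    linear_combination 2 * t₀ ^ 2 * h₁ + (s₀ * t₁ ^ 2 - 2 * s₁ * t₀ * t₁) * hs - t₀ * t₁ ^ 2 * ht
  have hD : D = 0 := by
    refine (mul_eq_zero.mp ?_).resolve_left h2Δ
    linear_combination 2 * s₀ ^ 2 * h₁ - s₀ * s₁ ^ 2 * hs + (s₁ ^ 2 * t₀ - 2 * s₀ * s₁ * t₁) * ht
  refine ⟨hA, (mul_eq_zero.mp ?_).resolve_left hΔ, hD⟩
  linear_combination t₁ * ht - s₁ * hs - 2 * t₀ * t₁ * hD + 2 * s₀ * s₁ * hA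

theorem exists_eq_mul_of_mul_eq_mul {K : Type*} [Field K] {s₀ t₀ s₁ t₁ : K}
    (h₀ : ¬(s₀ = 0 ∧ t₀ = 0)) (h : s₀ * t₁ = s₁ * t₀) : ∃ l, s₁ = l * s₀ ∧ t₁ = l * t₀ := by
  by_cases hs₀ : s₀ = 0
  · have ht₀ : t₀ ≠ 0 := fun ht₀ => h₀ ⟨hs₀, ht₀⟩
    refine ⟨t₁ / t₀, ?_, by field_simp⟩
    rw [hs₀, zero_mul, eq_comm, mul_eq_zero] at h
    simpa [hs₀, ht₀] using h
  · exact ⟨s₁ / s₀, by field_simp, by field_simp; linear_combination h⟩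

section ConicParam

variable {K M : Type*} [CommRing K] [AddCommGroup M] [Module K M]

/-- The parametrization of `conicOf v`. -/
def conicParam (v : Fin 3 → M) (s t : K) : M := s ^ 2 • v 0 + (s * t) • v 1 + t ^ 2 • v 2

theorem conicParam_mul_mul (v : Fin 3 → M) (l s t : K) :
    conicParam v (l * s) (l * t) = l ^ 2 • conicParam v s t := by
  simp only [conicParam]
  module

theorem conicParam_add_smul (v : Fin 3 → M) (s t a b ε : K) :
    conicParam v (s + ε * a) (t + ε * b) = conicParam v s t
      + ε • ((2 * s * a) • v 0 + (s * b + t * a) • v 1 + (2 * t * b) • v 2)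
      + ε ^ 2 • conicParam v a b := by
  simp only [conicParam]
  module

theorem map_conicParam (ℓ : M →ₗ[K] K) (v : Fin 3 → M) (s t : K) :
    ℓ (conicParam v s t) = s ^ 2 * ℓ (v 0) + s * t * ℓ (v 1) + t ^ 2 * ℓ (v 2) := by
  simp [conicParam]

theorem conicParam_ne_zero [IsDomain K] {v : Fin 3 → M} (hv : LinearIndependent K v)
    {s t : K} (hst : ¬(s = 0 ∧ t = 0)) : conicParam v s t ≠ 0 := by
  intro h
  have hsum : ∑ i, ![s ^ 2, s * t, t ^ 2] i • v i = 0 := by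
    simpa [Fin.sum_univ_three, conicParam] using h
  have hcoeff := Fintype.linearIndependent_iff.mp hv _ hsum
  exact hst ⟨pow_eq_zero_iff two_ne_zero |>.mp (hcoeff 0),
    pow_eq_zero_iff two_ne_zero |>.mp (hcoeff 2)⟩

end ConicParam

theorem differentialAt_conicParam_critical {σ K : Type*} [Fintype σ] [Field K] [Infinite K]
    {F : MvPolynomial σ K} {d : ℕ} (hF : F.IsHomogeneous d) {v : Fin 3 → σ → K}
    (hvanish : ∀ s t : K, eval (conicParam v s t) F = 0) {c : K} (hc : c ≠ 0) (s₀ t₀ : K) :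
    2 * s₀ * differentialAt F (c • conicParam v s₀ t₀) (v 0)
        + t₀ * differentialAt F (c • conicParam v s₀ t₀) (v 1) = 0 ∧
      s₀ * differentialAt F (c • conicParam v s₀ t₀) (v 1)
        + 2 * t₀ * differentialAt F (c • conicParam v s₀ t₀) (v 2) = 0 := by
  -- `ε ↦ c • φ(s₀ + εa, t₀ + εb)` is a quadratic curve in `V(F)` through `c • φ(s₀,t₀)`.
  have hpolar : ∀ a b : K, c * differentialAt F (c • conicParam v s₀ t₀)
      ((2 * s₀ * a) • v 0 + (s₀ * b + t₀ * a) • v 1 + (2 * t₀ * b) • v 2) = 0 := fun a b => by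
    rw [← smul_eq_mul, ← map_smul]
    refine differentialAt_eq_zero_of_eval_curve_eq_zero (z := c • conicParam v a b) fun ε => ?_
    rw [smul_comm ε c, smul_comm (ε ^ 2) c, ← smul_add, ← smul_add, ← conicParam_add_smul,
      hF.eval_smul_s10, hvanish, mul_zero]
  have h₁ := (mul_eq_zero.mp (hpolar 1 0)).resolve_left hc
  have h₂ := (mul_eq_zero.mp (hpolar 0 1)).resolve_left hc
  simp only [map_add, map_smul, smul_eq_mul] at h₁ h₂
  constructor
  · linear_combination h₁
  · linear_combination h₂

theorem mem_embTangent_iff {n : ℕ} {F : MvPolynomial (Fin (n + 1)) ℂ} {x p : Pr n} :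
    p ∈ embTangent F x ↔ differentialAt F (prRep x) (prRep p) = 0 :=
  LinearMap.mem_ker

theorem eq_of_prRep_eq_smul {n : ℕ} {x y : Pr n} {a : ℂ} (h : prRep y = a • prRep x) :
    x = y := by
  have hmk := (Projectivization.mk_eq_mk_iff' ℂ _ _ (Projectivization.rep_nonzero y)
    (Projectivization.rep_nonzero x)).mpr ⟨a, h.symm⟩
  exact (Projectivization.mk_rep x).symm.trans (hmk.symm.trans (Projectivization.mk_rep y))

theorem exists_prRep_eq_smul {n : ℕ} {u : Vn n} (hu : u ≠ 0) :
    ∃ p : Pr n, ∃ a : ℂ, a ≠ 0 ∧ prRep p = a • u := by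
  obtain ⟨a, ha⟩ := Projectivization.exists_smul_eq_mk_rep ℂ u hu
  exact ⟨Projectivization.mk ℂ u hu, a, a.ne_zero, ha.symm⟩

theorem eval_conicParam_eq_zero {n d : ℕ} {F : MvPolynomial (Fin (n + 1)) ℂ}
    (hF : F.IsHomogeneous d) {v : Fin 3 → Vn n} (hv : LinearIndependent ℂ v)
    (hCX : conicOf v ⊆ projZeros F) (s t : ℂ) : eval (conicParam v s t) F = 0 := by
  have hpoint : ∀ s t : ℂ, ¬(s = 0 ∧ t = 0) → eval (conicParam v s t) F = 0 := by
    intro s t hst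
    obtain ⟨p, a, ha, hp⟩ := exists_prRep_eq_smul (conicParam_ne_zero hv hst)
    have hzero : eval (prRep p) F = 0 := hCX ⟨s, t, hst, a, ha, hp⟩
    rw [hp, hF.eval_smul_s10] at hzero
    exact (mul_eq_zero.mp hzero).resolve_left (pow_ne_zero d ha)
  by_cases hst : s = 0 ∧ t = 0
  · obtain ⟨rfl, rfl⟩ := hst
    have hvertex := conicParam_mul_mul v (0 : ℂ) 1 0
    rw [zero_mul, zero_mul] at hvertex
    rw [hvertex, hF.eval_smul_s10, hpoint 1 0 (by simp), mul_zero]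
  · exact hpoint s t hst

theorem eq_of_prRep_eq_conicParam {n : ℕ} {v : Fin 3 → Vn n} {x y : Pr n}
    {s₀ t₀ s₁ t₁ c₀ c₁ : ℂ} (hst₀ : ¬(s₀ = 0 ∧ t₀ = 0)) (hc₀ : c₀ ≠ 0)
    (hx : prRep x = c₀ • conicParam v s₀ t₀) (hy : prRep y = c₁ • conicParam v s₁ t₁)
    (hdet : s₀ * t₁ = s₁ * t₀) : x = y := by
  obtain ⟨l, rfl, rfl⟩ := exists_eq_mul_of_mul_eq_mul hst₀ hdet
  refine eq_of_prRep_eq_smul (a := c₁ * l ^ 2 * c₀⁻¹) ?_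
  rw [hy, hx, conicParam_mul_mul, smul_smul, smul_smul, mul_assoc (c₁ * l ^ 2),
    inv_mul_cancel₀ hc₀, mul_one]

theorem lemma_Rxy_in_tangent_general (n d : ℕ) (F : MvPolynomial (Fin (n + 1)) ℂ)
    (hhom : F.IsHomogeneous d) (x y : Pr n) (hxy : x ≠ y) (hyT : y ∈ embTangent F x)
    (C : Set (Pr n)) (hC : IsSmoothConic C) (hCX : C ⊆ projZeros F)
    (hxC : x ∈ C) (hyC : y ∈ C) :
    C ⊆ embTangent F x := by
  obtain ⟨v, hv, rfl⟩ := hC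
  obtain ⟨s₀, t₀, hst₀, c₀, hc₀, hx₀⟩ := hxC
  obtain ⟨s₁, t₁, -, c₁, hc₁, hy₁⟩ := hyC
  change prRep x = c₀ • conicParam v s₀ t₀ at hx₀
  change prRep y = c₁ • conicParam v s₁ t₁ at hy₁
  have hcrit := differentialAt_conicParam_critical hhom (eval_conicParam_eq_zero hhom hv hCX)
    hc₀ s₀ t₀
  rw [← hx₀] at hcrit
  have hroot := mem_embTangent_iff.mp hyT
  rw [hy₁, map_smul, map_conicParam, smul_eq_mul] at hroot
  have hΔ : s₀ * t₁ - s₁ * t₀ ≠ 0 := fun h =>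
    hxy (eq_of_prRep_eq_conicParam hst₀ hc₀ hx₀ hy₁ (sub_eq_zero.mp h))
  obtain ⟨h₀, h₁, h₂⟩ := binaryQuadratic_eq_zero_of_double_root hcrit.1 hcrit.2
    ((mul_eq_zero.mp hroot).resolve_left hc₁) hΔ
  rintro p ⟨s, t, -, c, -, hp⟩
  change prRep p = c • conicParam v s t at hp
  rw [mem_embTangent_iff, hp, map_smul, map_conicParam, h₀, h₁, h₂]
  simp

/-- Lemma 3.4: if `x ≠ y` are points of a hypersurface `X = V(F)` with
`y ∈ T_x X`, then every smooth conic `C ⊆ X` through `x` and `y` satisfies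
`C ⊆ T_x X`. -/
theorem lemma_Rxy_in_tangent (n d : ℕ) (F : MvPolynomial (Fin (n + 1)) ℂ)
    (hF0 : F ≠ 0) (hhom : F.IsHomogeneous d)
    (x y : Pr n) (hx : x ∈ projZeros F) (hy : y ∈ projZeros F)
    (hxy : x ≠ y) (hyT : y ∈ embTangent F x)
    (C : Set (Pr n)) (hC : IsSmoothConic C) (hCX : C ⊆ projZeros F)
    (hxC : x ∈ C) (hyC : y ∈ C) :
    C ⊆ embTangent F x :=
  lemma_Rxy_in_tangent_general n d F hhom x y hxy hyT C hC hCX hxC hyC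

end
end
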